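/- With Ξ₁, Ξ₂ as above, [Ξ₁, conj(Ξ₂)] = i·2a·[∂_w, X₁] = ε·i·(4 a z̄/(1+ε|z|²))·∂_w. -/

import Mathlib

/-!
Write `Ξ₁ = X₁ + i a ∂_w`. Since `a` is real, `conj Ξ₂ = X₁ - i a ∂_w`, and expanding the bracket of
two such fields gives `[Ξ₁, conj Ξ₂] = 2i (a [∂_w, X₁] - X₁(a) ∂_w)`. The weight `a` is constant
along `X₁`: with `S = 1 + ε|z|²`, the term `X₁(|w|²) S⁻² = 2ε|w|² z̄ / S³` cancels
`|w|² X₁(S⁻²) = -2ε|w|² z̄ / S³`, so `X₁` annihilates `|w|² / S²` and hence `a`.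
Finally `[∂_w, X₁] = ∂_w(2εw z̄ / S) ∂_w = (2ε z̄ / S) ∂_w`.
-/

open Complex

/-- Wirtinger derivative `∂/∂z` (first coordinate) of `f : ℂ² → ℂ`. -/
noncomputable def dz (f : ℂ × ℂ → ℂ) (p : ℂ × ℂ) : ℂ :=
  (1 / 2) * (fderiv ℝ f p (1, 0) - Complex.I * fderiv ℝ f p (Complex.I, 0))

/-- Wirtinger derivative `∂/∂z̄`. -/
noncomputable def dzb (f : ℂ × ℂ → ℂ) (p : ℂ × ℂ) : ℂ :=
  (1 / 2) * (fderiv ℝ f p (1, 0) + Complex.I * fderiv ℝ f p (Complex.I, 0))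

/-- Wirtinger derivative `∂/∂w` (second coordinate). -/
noncomputable def dw (f : ℂ × ℂ → ℂ) (p : ℂ × ℂ) : ℂ :=
  (1 / 2) * (fderiv ℝ f p (0, 1) - Complex.I * fderiv ℝ f p (0, Complex.I))

/-- Wirtinger derivative `∂/∂w̄`. -/
noncomputable def dwb (f : ℂ × ℂ → ℂ) (p : ℂ × ℂ) : ℂ :=
  (1 / 2) * (fderiv ℝ f p (0, 1) + Complex.I * fderiv ℝ f p (0, Complex.I))

/-- A complex vector field on `ℂ²`, given by its coefficients in the frame
`(∂_z, ∂_z̄, ∂_w, ∂_w̄)`. -/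
abbrev VF := ℂ × ℂ → ℂ × ℂ × ℂ × ℂ

/-- Action of a complex vector field on a function. -/
noncomputable def appVF (X : VF) (f : ℂ × ℂ → ℂ) (p : ℂ × ℂ) : ℂ :=
  (X p).1 * dz f p + (X p).2.1 * dzb f p + (X p).2.2.1 * dw f p +
    (X p).2.2.2 * dwb f p

/-- Lie bracket of complex vector fields (in coefficients). -/
noncomputable def bracketVF (X Y : VF) : VF := fun p =>
  (appVF X (fun q => (Y q).1) p - appVF Y (fun q => (X q).1) p,
   appVF X (fun q => (Y q).2.1) p - appVF Y (fun q => (X q).2.1) p,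
   appVF X (fun q => (Y q).2.2.1) p - appVF Y (fun q => (X q).2.2.1) p,
   appVF X (fun q => (Y q).2.2.2) p - appVF Y (fun q => (X q).2.2.2) p)

/-- Conjugate of a complex vector field: coefficients are conjugated and the
frame vectors `∂_z ↔ ∂_z̄`, `∂_w ↔ ∂_w̄` are swapped. -/
noncomputable def conjVF (X : VF) : VF := fun p =>
  ((starRingEnd ℂ) (X p).2.1, (starRingEnd ℂ) (X p).1,
   (starRingEnd ℂ) (X p).2.2.2, (starRingEnd ℂ) (X p).2.2.1)

/-- The horizontal lift `X₁ = ∂_z + ε(2wz̄)/(1+ε|z|²) ∂_w`. -/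
noncomputable def X₁ (ε : ℝ) : VF := fun p =>
  (1, 0, (ε : ℂ) * 2 * p.2 * (starRingEnd ℂ) p.1 /
    ((1 + ε * Complex.normSq p.1 : ℝ) : ℂ), 0)

/-- The horizontal lift `X₂ = ∂_z̄ + ε(2w̄z)/(1+ε|z|²) ∂_w̄`. -/
noncomputable def X₂ (ε : ℝ) : VF := fun p =>
  (0, 1, 0, (ε : ℂ) * 2 * (starRingEnd ℂ) p.2 * p.1 /
    ((1 + ε * Complex.normSq p.1 : ℝ) : ℂ))

/-- The weight function `a = sqrt (c1 + 4ε|w|²/(1+ε|z|²)²)`, as a `ℂ`-valued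
function on `ℂ²`. -/
noncomputable def wfun (ε c1 : ℝ) (p : ℂ × ℂ) : ℂ :=
  ((Real.sqrt (c1 + ε * 4 * Complex.normSq p.2 /
    (1 + ε * Complex.normSq p.1) ^ 2) : ℝ) : ℂ)

open ComplexConjugate

attribute [fun_prop] Complex.differentiable_ofReal

@[fun_prop]
lemma differentiable_normSq : Differentiable ℝ normSq := by
  have h : (normSq : ℂ → ℝ) = fun z => ‖z‖ ^ 2 := funext fun z => (Complex.sq_norm z).symm
  rw [h]
  exact (differentiable_id (𝕜 := ℝ) (E := ℂ)).norm_sq ℝ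

section WirtingerCalculus

variable {X : VF} {f g : ℂ × ℂ → ℂ} {p : ℂ × ℂ}

@[simp]
lemma appVF_const (c : ℂ) : appVF X (fun _ => c) p = 0 := by
  simp [appVF, dz, dzb, dw, dwb]

lemma appVF_add (hf : DifferentiableAt ℝ f p) (hg : DifferentiableAt ℝ g p) :
    appVF X (fun q => f q + g q) p = appVF X f p + appVF X g p := by
  simp only [appVF, dz, dzb, dw, dwb, fderiv_fun_add hf hg, add_apply]
  ring

lemma appVF_sub (hf : DifferentiableAt ℝ f p) (hg : DifferentiableAt ℝ g p) :
    appVF X (fun q => f q - g q) p = appVF X f p - appVF X g p := by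
  simp only [appVF, dz, dzb, dw, dwb, fderiv_fun_sub hf hg, sub_apply]
  ring

lemma appVF_const_mul (c : ℂ) (hf : DifferentiableAt ℝ f p) :
    appVF X (fun q => c * f q) p = c * appVF X f p := by
  simp only [appVF, dz, dzb, dw, dwb, fderiv_const_mul hf, smul_apply,
    smul_eq_mul]
  ring

lemma appVF_mul (hf : DifferentiableAt ℝ f p) (hg : DifferentiableAt ℝ g p) :
    appVF X (fun q => f q * g q) p = f p * appVF X g p + g p * appVF X f p := by
  simp only [appVF, dz, dzb, dw, dwb, fderiv_fun_mul hf hg, add_apply,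
    smul_apply, smul_eq_mul]
  ring

lemma appVF_pow (n : ℕ) (hf : DifferentiableAt ℝ f p) :
    appVF X (fun q => f q ^ n) p = n * f p ^ (n - 1) * appVF X f p := by
  simp only [appVF, dz, dzb, dw, dwb, fderiv_fun_pow n hf, smul_apply, smul_eq_mul, nsmul_eq_mul]
  ring

lemma appVF_inv (hf : DifferentiableAt ℝ f p) (hfp : f p ≠ 0) :
    appVF X (fun q => (f q)⁻¹) p = -appVF X f p / f p ^ 2 := by
  have h := (hasFDerivAt_inv' (𝕜 := ℝ) hfp).comp p hf.hasFDerivAt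
  simp only [appVF, dz, dzb, dw, dwb, Function.comp_def] at h ⊢
  simp only [h.fderiv, ContinuousLinearMap.comp_apply, neg_apply,
    ContinuousLinearMap.mulLeftRight_apply]
  field_simp
  ring

lemma appVF_div (hf : DifferentiableAt ℝ f p) (hg : DifferentiableAt ℝ g p) (hgp : g p ≠ 0) :
    appVF X (fun q => f q / g q) p = (g p * appVF X f p - f p * appVF X g p) / g p ^ 2 := by
  simp only [div_eq_mul_inv]
  rw [appVF_mul hf (hg.fun_inv hgp), appVF_inv hg hgp]
  field_simp
  ring

@[simp]
lemma appVF_fst : appVF X (fun q => q.1) p = (X p).1 := by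
  norm_num [appVF, dz, dzb, dw, dwb, fderiv_fst]

@[simp]
lemma appVF_snd : appVF X (fun q => q.2) p = (X p).2.2.1 := by
  norm_num [appVF, dz, dzb, dw, dwb, fderiv_snd]

lemma fderiv_conj_comp {L : ℂ × ℂ →L[ℝ] ℂ} :
    fderiv ℝ (fun q => conj (L q)) p = conjCLE.toContinuousLinearMap.comp L :=
  (conjCLE.hasFDerivAt.comp p L.hasFDerivAt).fderiv

@[simp]
lemma appVF_conj_fst : appVF X (fun q => conj q.1) p = (X p).2.1 := by
  have := fderiv_conj_comp (p := p) (L := ContinuousLinearMap.fst ℝ ℂ ℂ)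
  simp only [ContinuousLinearMap.coe_fst'] at this
  norm_num [appVF, dz, dzb, dw, dwb, this]

@[simp]
lemma appVF_conj_snd : appVF X (fun q => conj q.2) p = (X p).2.2.2 := by
  have := fderiv_conj_comp (p := p) (L := ContinuousLinearMap.snd ℝ ℂ ℂ)
  simp only [ContinuousLinearMap.coe_snd'] at this
  norm_num [appVF, dz, dzb, dw, dwb, this]

lemma appVF_normSq_fst :
    appVF X (fun q => (normSq q.1 : ℂ)) p = (X p).1 * conj p.1 + (X p).2.1 * p.1 := by
  simp only [← Complex.mul_conj]
  rw [appVF_mul (by fun_prop) (by fun_prop)]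
  simp only [appVF_fst, appVF_conj_fst]
  ring

lemma appVF_normSq_snd :
    appVF X (fun q => (normSq q.2 : ℂ)) p = (X p).2.2.1 * conj p.2 + (X p).2.2.2 * p.2 := by
  simp only [← Complex.mul_conj]
  rw [appVF_mul (by fun_prop) (by fun_prop)]
  simp only [appVF_snd, appVF_conj_snd]
  ring

lemma appVF_ofReal_comp {r : ℂ × ℂ → ℝ} {φ : ℝ → ℝ} {φ' : ℝ} (hφ : HasDerivAt φ φ' (r p))
    (hr : DifferentiableAt ℝ r p) :
    appVF X (fun q => (φ (r q) : ℂ)) p = φ' * appVF X (fun q => (r q : ℂ)) p := by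
  have hcomp := ofRealCLM.hasFDerivAt.comp p (hφ.comp_hasFDerivAt p hr.hasFDerivAt)
  have hinner := ofRealCLM.hasFDerivAt.comp p hr.hasFDerivAt
  simp only [Function.comp_def, ofRealCLM_apply] at hcomp hinner
  simp only [appVF, dz, dzb, dw, dwb, hcomp.fderiv, hinner.fderiv, ContinuousLinearMap.comp_apply,
    smul_apply, ofRealCLM_apply, smul_eq_mul, ofReal_mul]
  ring

end WirtingerCalculus

lemma bracketVF_of_const_except_dw (a₁ a₂ a₄ b₁ b₂ b₄ : ℂ) (α β : ℂ × ℂ → ℂ) (p : ℂ × ℂ) :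
    bracketVF (fun q => (a₁, a₂, α q, a₄)) (fun q => (b₁, b₂, β q, b₄)) p =
      (0, 0, appVF (fun q => (a₁, a₂, α q, a₄)) β p - appVF (fun q => (b₁, b₂, β q, b₄)) α p, 0) := by
  simp [bracketVF]

lemma bracketVF_add_sub_I_mul_dw {α a : ℂ × ℂ → ℂ} {p : ℂ × ℂ} (hα : DifferentiableAt ℝ α p)
    (ha : DifferentiableAt ℝ a p) :
    bracketVF (fun q => (1, 0, α q + I * a q, 0)) (fun q => (1, 0, α q - I * a q, 0)) p =
      (0, 0, 2 * I * (a p * appVF (fun _ => (0, 0, 1, 0)) α p -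
        appVF (fun q => (1, 0, α q, 0)) a p), 0) := by
  have hIa : DifferentiableAt ℝ (fun q => I * a q) p := ha.const_mul I
  rw [bracketVF_of_const_except_dw, appVF_sub hα hIa, appVF_add hα hIa, appVF_const_mul I ha,
    appVF_const_mul I ha]
  simp only [appVF, Prod.mk.injEq, true_and, and_true]
  ring

noncomputable def horizCoeff (ε : ℝ) (q : ℂ × ℂ) : ℂ :=
  (ε : ℂ) * 2 * q.2 * conj q.1 / ((1 + ε * normSq q.1 : ℝ) : ℂ)

noncomputable def radicand (ε c1 : ℝ) (q : ℂ × ℂ) : ℝ :=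
  c1 + ε * 4 * normSq q.2 / (1 + ε * normSq q.1) ^ 2

section HorizontalLift

variable {ε c1 : ℝ} {p : ℂ × ℂ}

lemma X₁_apply (q : ℂ × ℂ) : X₁ ε q = (1, 0, horizCoeff ε q, 0) := rfl

lemma differentiableAt_horizCoeff (hS : 1 + ε * normSq p.1 ≠ 0) :
    DifferentiableAt ℝ (horizCoeff ε) p := by
  have hS' : ((1 + ε * normSq p.1 : ℝ) : ℂ) ≠ 0 := ofReal_ne_zero.mpr hS
  unfold horizCoeff
  simp only [div_eq_mul_inv]
  fun_prop (disch := exact hS')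

lemma differentiableAt_wfun (hS : 1 + ε * normSq p.1 ≠ 0) (hr : radicand ε c1 p ≠ 0) :
    DifferentiableAt ℝ (wfun ε c1) p := by
  unfold wfun
  fun_prop (disch := first | exact hr | exact pow_ne_zero 2 hS)

lemma appVF_dw_horizCoeff (hS : 1 + ε * normSq p.1 ≠ 0) :
    appVF (fun _ => (0, 0, 1, 0)) (horizCoeff ε) p =
      ε * 2 * conj p.1 / ((1 + ε * normSq p.1 : ℝ) : ℂ) := by
  have hS' : ((1 + ε * normSq p.1 : ℝ) : ℂ) ≠ 0 := ofReal_ne_zero.mpr hS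
  unfold horizCoeff
  push_cast at hS' ⊢
  rw [appVF_div (by fun_prop) (by fun_prop) hS']
  simp (disch := fun_prop) only [appVF_mul, appVF_add, appVF_const, appVF_snd, appVF_conj_fst,
    appVF_normSq_fst]
  field_simp
  ring

lemma appVF_X₁_radicand (hS : 1 + ε * normSq p.1 ≠ 0) :
    appVF (X₁ ε) (fun q => (radicand ε c1 q : ℂ)) p = 0 := by
  have hS' : ((1 + ε * normSq p.1 : ℝ) : ℂ) ≠ 0 := ofReal_ne_zero.mpr hS
  unfold radicand
  push_cast at hS' ⊢
  have hS2 := pow_ne_zero 2 hS'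
  simp only [div_eq_mul_inv]
  simp (disch := first | assumption | fun_prop (disch := assumption)) only [appVF_mul, appVF_add,
    appVF_inv, appVF_pow, appVF_const, appVF_normSq_fst, appVF_normSq_snd, X₁_apply, horizCoeff]
  rw [← mul_conj p.2]
  push_cast
  field_simp
  ring

lemma appVF_X₁_wfun (hS : 1 + ε * normSq p.1 ≠ 0) (hr : radicand ε c1 p ≠ 0) :
    appVF (X₁ ε) (wfun ε c1) p = 0 := by
  have hdiff : DifferentiableAt ℝ (radicand ε c1) p := by
    unfold radicand; fun_prop (disch := exact pow_ne_zero 2 hS)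
  change appVF (X₁ ε) (fun q => (Real.sqrt (radicand ε c1 q) : ℂ)) p = 0
  rw [appVF_ofReal_comp (Real.hasDerivAt_sqrt hr) hdiff, appVF_X₁_radicand hS, mul_zero]

end HorizontalLift

theorem stmt_13_general (ε c1 : ℝ) (p : ℂ × ℂ)
    (hz : 0 < 1 + ε * Complex.normSq p.1)
    (ha : 0 < c1 + ε * 4 * Complex.normSq p.2 / (1 + ε * Complex.normSq p.1) ^ 2) :
    bracketVF
        (fun q => ((X₁ ε q).1, (X₁ ε q).2.1,
          (X₁ ε q).2.2.1 + Complex.I * wfun ε c1 q, (X₁ ε q).2.2.2))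
        (conjVF (fun q => ((X₂ ε q).1, (X₂ ε q).2.1, (X₂ ε q).2.2.1,
          (X₂ ε q).2.2.2 + Complex.I * wfun ε c1 q))) p =
      (Complex.I * 2 * wfun ε c1 p) •
        bracketVF (fun _ => (0, 0, 1, 0)) (X₁ ε) p ∧
    bracketVF
        (fun q => ((X₁ ε q).1, (X₁ ε q).2.1,
          (X₁ ε q).2.2.1 + Complex.I * wfun ε c1 q, (X₁ ε q).2.2.2))
        (conjVF (fun q => ((X₂ ε q).1, (X₂ ε q).2.1, (X₂ ε q).2.2.1,
          (X₂ ε q).2.2.2 + Complex.I * wfun ε c1 q))) p =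
      (0, 0,
       (ε : ℂ) * Complex.I * (4 * wfun ε c1 p * (starRingEnd ℂ) p.1 /
         ((1 + ε * Complex.normSq p.1 : ℝ) : ℂ)), 0) := by
  have hS := hz.ne'
  have hΞ₁ : (fun q => ((X₁ ε q).1, (X₁ ε q).2.1, (X₁ ε q).2.2.1 + I * wfun ε c1 q,
      (X₁ ε q).2.2.2)) = fun q => (1, 0, horizCoeff ε q + I * wfun ε c1 q, 0) := rfl
  have hconjΞ₂ : conjVF (fun q => ((X₂ ε q).1, (X₂ ε q).2.1, (X₂ ε q).2.2.1,
      (X₂ ε q).2.2.2 + I * wfun ε c1 q)) =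
      fun q => (1, 0, horizCoeff ε q - I * wfun ε c1 q, 0) := by
    funext q
    have hconj_wfun : conj (wfun ε c1 q) = wfun ε c1 q := conj_ofReal _
    simp only [conjVF, X₂, horizCoeff, map_add, map_mul, map_div₀, map_ofNat, conj_ofReal, conj_I,
      conj_conj, hconj_wfun, map_one, map_zero, Prod.mk.injEq, true_and, and_true]
    ring
  have hΞ : bracketVF (fun q => (1, 0, horizCoeff ε q + I * wfun ε c1 q, 0))
      (fun q => (1, 0, horizCoeff ε q - I * wfun ε c1 q, 0)) p =
      (0, 0, 2 * I * (wfun ε c1 p * appVF (fun _ => (0, 0, 1, 0)) (horizCoeff ε) p), 0) := by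
    rw [bracketVF_add_sub_I_mul_dw (differentiableAt_horizCoeff hS) (differentiableAt_wfun hS ha.ne')]
    rw [← funext X₁_apply, appVF_X₁_wfun hS ha.ne', sub_zero]
  have hdw : bracketVF (fun _ => (0, 0, 1, 0)) (X₁ ε) p =
      (0, 0, appVF (fun _ => (0, 0, 1, 0)) (horizCoeff ε) p, 0) := by
    have h := bracketVF_of_const_except_dw 0 0 0 1 0 0 (fun _ => 1) (horizCoeff ε) p
    rwa [appVF_const, sub_zero] at h
  rw [hΞ₁, hconjΞ₂, hΞ, hdw, appVF_dw_horizCoeff hS]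
  constructor
  · simp only [Prod.smul_mk, smul_eq_mul, mul_zero, Prod.mk.injEq, true_and, and_true]
    ring
  · simp only [Prod.mk.injEq, true_and, and_true]
    ring

/-- `[Ξ₁, conj Ξ₂] = i 2 a [∂_w, X₁] = ε i (4 a z̄/(1+ε|z|²)) ∂_w`. -/
theorem stmt_13 (ε c1 : ℝ) (hε : ε = 1 ∨ ε = -1) (hc1 : 0 < c1) (p : ℂ × ℂ)
    (hz : 0 < 1 + ε * Complex.normSq p.1)
    (ha : 0 < c1 + ε * 4 * Complex.normSq p.2 / (1 + ε * Complex.normSq p.1) ^ 2) :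
    bracketVF
        (fun q => ((X₁ ε q).1, (X₁ ε q).2.1,
          (X₁ ε q).2.2.1 + Complex.I * wfun ε c1 q, (X₁ ε q).2.2.2))
        (conjVF (fun q => ((X₂ ε q).1, (X₂ ε q).2.1, (X₂ ε q).2.2.1,
          (X₂ ε q).2.2.2 + Complex.I * wfun ε c1 q))) p =
      (Complex.I * 2 * wfun ε c1 p) •
        bracketVF (fun _ => (0, 0, 1, 0)) (X₁ ε) p ∧
    bracketVF
        (fun q => ((X₁ ε q).1, (X₁ ε q).2.1,
          (X₁ ε q).2.2.1 + Complex.I * wfun ε c1 q, (X₁ ε q).2.2.2))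
        (conjVF (fun q => ((X₂ ε q).1, (X₂ ε q).2.1, (X₂ ε q).2.2.1,
          (X₂ ε q).2.2.2 + Complex.I * wfun ε c1 q))) p =
      (0, 0,
       (ε : ℂ) * Complex.I * (4 * wfun ε c1 p * (starRingEnd ℂ) p.1 /
         ((1 + ε * Complex.normSq p.1 : ℝ) : ℂ)), 0) :=
  stmt_13_general ε c1 p hz ha
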